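/- For any degenerate simplex z in a simplicial set S, there is a unique nondegenerate simplex z' and a unique degeneracy operator σ (a surjective map of simplices) such that z = σ*(z'); consequently, for any map T → S from a necklace T, there exists a necklace T̄, a totally nondegenerate map T̄ → S, and a surjection of necklaces T → T̄ over S, unique up to isomorphism. -/

import Mathlib

open CategoryTheory Simplicial

namespace Paper

/-- The directed-edge relation on vertices of a simplicial set. -/
def edgeRel (X : SSet) (x y : X _⦋0⦌) : Prop :=
  ∃ e : X _⦋1⦌, X.δ 1 e = x ∧ X.δ 0 e = y

/-- `x ⪯ y` iff there is a finite directed path of 1-simplices from `x` to `y`. -/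
def vertPath (X : SSet) : X _⦋0⦌ → X _⦋0⦌ → Prop :=
  Relation.ReflTransGen (edgeRel X)

/-- The sequence of vertices of an `n`-simplex. -/
def vertexSeq {X : SSet} {n : ℕ} (x : X _⦋n⦌) : Fin (n + 1) → X _⦋0⦌ :=
  fun i => X.map (SimplexCategory.const (⦋0⦌ : SimplexCategory) ⦋n⦌ i).op x

/-- A simplicial set is *ordered* if the path preorder on its vertices is
antisymmetric and every simplex is determined by its sequence of vertices. -/
def Ordered (X : SSet) : Prop :=
  (∀ x y : X _⦋0⦌, vertPath X x y → vertPath X y x → x = y) ∧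
  (∀ (n : ℕ) (x y : X _⦋n⦌), vertexSeq x = vertexSeq y → x = y)

/-- A hands-on model of the standard `n`-simplex. -/
def Δstd (n : ℕ) : SSet where
  obj m := Fin (m.unop.len + 1) →o Fin (n + 1)
  map φ := TypeCat.ofHom fun f => f.comp φ.unop.toOrderHom
  map_id _ := rfl
  map_comp _ _ := rfl

/-- The condition cutting a necklace with joint set `J` out of `Δstd N`:
no joint lies strictly between the first and last vertex of the simplex. -/
def NeckCond {N : ℕ} (J : Finset (Fin (N + 1))) {m : SimplexCategoryᵒᵖ}
    (f : Fin (m.unop.len + 1) →o Fin (N + 1)) : Prop :=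
  ∀ t ∈ J, ¬ (f 0 < t ∧ t < f (Fin.last m.unop.len))

/-- The necklace with vertices `0,…,N` and joints `J` (a wedge of simplices glued
end to end; the beads span the intervals between consecutive joints). -/
def Necklace (N : ℕ) (J : Finset (Fin (N + 1))) : SSet where
  obj m := { f : Fin (m.unop.len + 1) →o Fin (N + 1) // NeckCond J f }
  map φ := TypeCat.ofHom fun f => ⟨f.1.comp φ.unop.toOrderHom, by
    intro t ht h
    exact f.2 t ht ⟨lt_of_le_of_lt (f.1.monotone (Fin.zero_le _)) h.1,
      lt_of_lt_of_le h.2 (f.1.monotone (Fin.le_last _))⟩⟩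
  map_id _ := rfl
  map_comp _ _ := rfl

/-- The vertex `v` of a necklace. -/
def vtx {N : ℕ} (J : Finset (Fin (N + 1))) (v : Fin (N + 1)) : (Necklace N J) _⦋0⦌ :=
  ⟨⟨fun _ => v, fun _ _ _ => le_rfl⟩, fun _ _ h => absurd (h.1.trans h.2) (lt_irrefl v)⟩

/-- The canonical inclusion of a necklace into the simplex on its vertices. -/
def neckIncl (N : ℕ) (J : Finset (Fin (N + 1))) : Necklace N J ⟶ Δstd N where
  app _ := TypeCat.ofHom fun f => f.1
  naturality _ _ _ := rfl

lemma eq_vtx {N : ℕ} {J : Finset (Fin (N + 1))} (x : (Necklace N J) _⦋0⦌) :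
    x = vtx J (x.1 0) := by
  refine Subtype.ext (OrderHom.ext _ _ (funext fun i => ?_))
  have : i = 0 := Subsingleton.elim (α := Fin 1) i 0
  rw [this]; rfl

/-- The map induced on vertices by a map of necklaces. -/
def nvmap {N N' : ℕ} {J : Finset (Fin (N + 1))} {J' : Finset (Fin (N' + 1))}
    (g : Necklace N J ⟶ Necklace N' J') : Fin (N + 1) → Fin (N' + 1) :=
  fun v => (g.app (Opposite.op (⦋0⦌ : SimplexCategory)) (vtx J v)).1 0

lemma app_vtx {N N' : ℕ} {J : Finset (Fin (N + 1))} {J' : Finset (Fin (N' + 1))}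
    (g : Necklace N J ⟶ Necklace N' J') (v : Fin (N + 1)) :
    g.app (Opposite.op (⦋0⦌ : SimplexCategory)) (vtx J v) = vtx J' (nvmap g v) :=
  eq_vtx _

lemma nvmap_comp {N N' N'' : ℕ} {J : Finset (Fin (N + 1))} {J' : Finset (Fin (N' + 1))}
    {J'' : Finset (Fin (N'' + 1))} (g : Necklace N J ⟶ Necklace N' J')
    (h : Necklace N' J' ⟶ Necklace N'' J'') :
    nvmap (g ≫ h) = nvmap h ∘ nvmap g := by
  funext v
  show (h.app _ (g.app _ (vtx J v))).1 0 = _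
  rw [app_vtx g v]
  rfl

/-- A map of simplicial sets is a *simple inclusion* if it has the right lifting
property with respect to the endpoint inclusions `∂Δ¹ ↪ T` for every necklace `T`. -/
def IsSimpleInclusion {A X : SSet} (i : A ⟶ X) : Prop :=
  ∀ (N : ℕ) (J : Finset (Fin (N + 1))), (0 : Fin (N + 1)) ∈ J → Fin.last N ∈ J →
    ∀ (v : Necklace N J ⟶ X) (a b : A _⦋0⦌),
      i.app _ a = v.app _ (vtx J 0) → i.app _ b = v.app _ (vtx J (Fin.last N)) →
      ∃ l : Necklace N J ⟶ A, l ≫ i = v ∧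
        l.app _ (vtx J 0) = a ∧ l.app _ (vtx J (Fin.last N)) = b

def Pstd (m : ℕ) (n : Fin m → ℕ) : SSet where
  obj k := ∀ i : Fin m, Fin (k.unop.len + 1) →o Fin (n i + 1)
  map φ := TypeCat.ofHom fun f => fun i => (f i).comp φ.unop.toOrderHom
  map_id _ := rfl
  map_comp _ _ := rfl

/-- A simplex of a simplicial set is nondegenerate if it is not the image of a
lower-dimensional simplex under a degeneracy operator. -/
def IsNondeg {X : SSet} {n : ℕ} (x : X _⦋n⦌) : Prop :=
  ∀ (m : ℕ) (σ : (⦋n⦌ : SimplexCategory) ⟶ ⦋m⦌) (y : X _⦋m⦌),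
    Function.Surjective σ.toOrderHom → x = X.map σ.op y → n ≤ m

/-- A simplex is degenerate if it is the image of a  strictly lower-dimensional
simplex under a (surjective) degeneracy operator. -/
def IsDegenerate {X : SSet} {n : ℕ} (x : X _⦋n⦌) : Prop :=
  ∃ (m : ℕ) (σ : (⦋n⦌ : SimplexCategory) ⟶ ⦋m⦌) (y : X _⦋m⦌),
    m < n ∧ Function.Surjective σ.toOrderHom ∧ x = X.map σ.op y


/-- The bead of a necklace spanning two consecutive joints `j ≤ j'`. -/
def bead {N : ℕ} (J : Finset (Fin (N + 1))) (j j' : Fin (N + 1)) (hle : j ≤ j')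
    (hcons : ∀ t ∈ J, ¬ (j < t ∧ t < j')) :
    (Necklace N J) _⦋j'.val - j.val⦌ :=
  ⟨⟨fun k => ⟨j.val + k.val, by
        have hk := k.isLt
        simp only [Opposite.unop_op, SimplexCategory.len_mk] at hk
        have := j'.isLt; omega⟩,
      fun k k' h => by
        simp only [Fin.mk_le_mk]
        exact Nat.add_le_add_left h j.val⟩,
    by
      intro t ht h
      refine hcons t ht ⟨?_, ?_⟩
      · have h1 : j.val + 0 < t.val := h.1
        simp only [Fin.lt_def, OrderHom.coe_mk, Fin.val_zero] at h1 ⊢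
        omega
      · have h2 : t.val < j.val + (j'.val - j.val) := h.2
        have hle' : j.val ≤ j'.val := hle
        simp only [Fin.lt_def, OrderHom.coe_mk, Fin.val_last, Opposite.unop_op,
          SimplexCategory.len_mk] at h2 ⊢
        omega⟩

/-- A map from a necklace is totally nondegenerate if it sends each bead to a
nondegenerate simplex. -/
def TotallyNondeg {N : ℕ} {J : Finset (Fin (N + 1))} {S : SSet}
    (f : Necklace N J ⟶ S) : Prop :=
  ∀ (j j' : Fin (N + 1)), j ∈ J → j' ∈ J → ∀ (hlt : j < j')
    (hcons : ∀ t ∈ J, ¬ (j < t ∧ t < j')),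
    IsNondeg (f.app _ (bead J j j' hlt.le hcons))

/-- A levelwise surjection of simplicial sets. -/
def LevelSurj {X Y : SSet} (f : X ⟶ Y) : Prop :=
  ∀ m, Function.Surjective (f.app m)

/-- The category of necklaces over `S` with endpoints `a` and `b`. -/
structure NecOver (S : SSet) (a b : S _⦋0⦌) where
  N : ℕ
  J : Finset (Fin (N + 1))
  h0 : (0 : Fin (N + 1)) ∈ J
  hN : Fin.last N ∈ J
  f : Necklace N J ⟶ S
  ha : f.app _ (vtx J 0) = a
  hb : f.app _ (vtx J (Fin.last N)) = b

instance (S : SSet) (a b : S _⦋0⦌) : Category (NecOver S a b) where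
  Hom t u := { g : Necklace t.N t.J ⟶ Necklace u.N u.J //
    g ≫ u.f = t.f ∧ g.app _ (vtx t.J 0) = vtx u.J 0 ∧
    g.app _ (vtx t.J (Fin.last t.N)) = vtx u.J (Fin.last u.N) }
  id t := ⟨𝟙 _, Category.id_comp _, rfl, rfl⟩
  comp {t u v} g h := ⟨g.1 ≫ h.1, by rw [Category.assoc, h.2.1, g.2.1],
    by show h.1.app _ (g.1.app _ _) = _; rw [g.2.2.1, h.2.2.1],
    by show h.1.app _ (g.1.app _ _) = _; rw [g.2.2.2, h.2.2.2]⟩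
  id_comp g := Subtype.ext (Category.id_comp _)
  comp_id g := Subtype.ext (Category.comp_id _)
  assoc f g h := Subtype.ext (Category.assoc _ _ _)


/-- Flagged necklaces over `S` with endpoints `a, b` and flags of length `n`. -/
structure FlaggedNec (S : SSet) (a b : S _⦋0⦌) (n : ℕ) where
  N : ℕ
  J : Finset (Fin (N + 1))
  h0 : (0 : Fin (N + 1)) ∈ J
  hN : Fin.last N ∈ J
  f : Necklace N J ⟶ S
  ha : f.app _ (vtx J 0) = a
  hb : f.app _ (vtx J (Fin.last N)) = b
  flag : Fin (n + 1) → Finset (Fin (N + 1))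
  flag_mono : Monotone flag
  flag_joints : J ⊆ flag 0

instance (S : SSet) (a b : S _⦋0⦌) (n : ℕ) : Category (FlaggedNec S a b n) where
  Hom t u := { g : Necklace t.N t.J ⟶ Necklace u.N u.J //
    g ≫ u.f = t.f ∧ g.app _ (vtx t.J 0) = vtx u.J 0 ∧
    g.app _ (vtx t.J (Fin.last t.N)) = vtx u.J (Fin.last u.N) ∧
    ∀ i, (t.flag i).image (nvmap g) = u.flag i }
  id t := ⟨𝟙 _, Category.id_comp _, rfl, rfl, fun i => by
    have : nvmap (𝟙 (Necklace t.N t.J)) = id := rfl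
    rw [this, Finset.image_id]⟩
  comp {t u v} g h := ⟨g.1 ≫ h.1, by rw [Category.assoc, h.2.1, g.2.1],
    by show h.1.app _ (g.1.app _ _) = _; rw [g.2.2.1, h.2.2.1],
    by show h.1.app _ (g.1.app _ _) = _; rw [g.2.2.2.1, h.2.2.2.1],
    fun i => by
      rw [nvmap_comp, ← Finset.image_image, g.2.2.2.2 i, h.2.2.2.2 i]⟩
  id_comp g := Subtype.ext (Category.id_comp _)
  comp_id g := Subtype.ext (Category.comp_id _)
  assoc f g h := Subtype.ext (Category.assoc _ _ _)

/-!
The first part is the Eilenberg–Zilber lemma, available in Mathlib (`SSet.exists_nonDegenerate`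
and `SSet.unique_nonDegenerate_*`) once `IsNondeg` is identified with `SSet.nonDegenerate`.

For the second part, write the image under `f` of each bead of `T` as `σ^* z` with `σ` a
degeneracy operator and `z` nondegenerate. Gluing the `σ` of consecutive beads gives a monotone
surjection `π` from the vertices of `T` onto those of a smaller necklace `T̄`, whose joints are the
images of the joints of `T`, and `π` induces a levelwise surjection `T → T̄`. On every bead `f` is
`z` pulled back along `σ`, so `f a` depends only on `π ∘ a`, and `f` descends to a map `T̄ → S`
sending each bead to the corresponding `z`. Conversely, if `T → T₂ → S` is another such
factorization, the uniqueness in the Eilenberg–Zilber lemma, applied bead by bead, forces the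
vertex map of `T → T₂` to be `π`; and a map of necklaces is determined by its vertex map.
-/

end Paper

section MonotoneSurjection

lemma Monotone.apply_max_min_eq {α β : Type*} [LinearOrder α] [PartialOrder β] {φ : α → β}
    (hφ : Monotone φ) {j j' x : α} {c : β} (hjj' : j ≤ j') (hx : φ x = c) (hj : φ j ≤ c)
    (hj' : c ≤ φ j') : φ (max j (min j' x)) = c := by
  rcases le_total x j' with hxj' | hj'x
  · rw [min_eq_right hxj']
    rcases le_total j x with hjx | hxj
    · rw [max_eq_right hjx, hx]
    · rw [max_eq_left hxj]
      exact le_antisymm hj (hx ▸ hφ hxj)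
  · rw [min_eq_left hj'x, max_eq_right hjj']
    exact le_antisymm (hx ▸ hφ hj'x) hj'

variable {n m : ℕ} (u : Fin (n + 1) →o Fin (m + 1)) (hu : Function.Surjective u)
include hu

lemma OrderHom.apply_zero_of_surjective : u 0 = 0 := by
  obtain ⟨x, hx⟩ := hu 0
  exact le_antisymm (hx ▸ u.monotone (Fin.zero_le x)) (Fin.zero_le _)

lemma OrderHom.apply_last_of_surjective : u (Fin.last n) = Fin.last m := by
  obtain ⟨x, hx⟩ := hu (Fin.last m)
  exact le_antisymm (Fin.le_last _) (hx ▸ u.monotone (Fin.le_last x))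

lemma OrderHom.val_apply_succ_le_of_surjective (i : Fin n) :
    (u i.succ).val ≤ (u i.castSucc).val + 1 := by
  by_contra! h
  obtain ⟨x, hx⟩ := hu ⟨(u i.castSucc).val + 1, by omega⟩
  rcases le_or_gt x i.castSucc with hxi | hix
  · have : (u i.castSucc).val + 1 ≤ (u i.castSucc).val := Fin.le_def.1 (hx ▸ u.monotone hxi)
    omega
  · have : (u i.succ).val ≤ (u i.castSucc).val + 1 :=
      Fin.le_def.1 (hx ▸ u.monotone (Fin.castSucc_lt_iff_succ_le.1 hix))
    omega

lemma OrderHom.exists_section_of_surjective :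
    ∃ s : Fin (m + 1) →o Fin (n + 1), ∀ c, u (s c) = c := by
  have : Epi (SimplexCategory.mkHom u) := SimplexCategory.epi_iff_surjective.2 hu
  have := isSplitEpi_of_epi (SimplexCategory.mkHom u)
  refine ⟨(section_ (SimplexCategory.mkHom u)).toOrderHom, fun c => ?_⟩
  exact SimplexCategory.congr_toOrderHom_apply (IsSplitEpi.id (SimplexCategory.mkHom u)) c

end MonotoneSurjection

namespace Paper

section EilenbergZilber

variable {X : SSet} {n : ℕ}

lemma isNondeg_iff_mem_nonDegenerate (x : X _⦋n⦌) : IsNondeg x ↔ x ∈ X.nonDegenerate n := by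
  rw [SSet.mem_nonDegenerate_iff_notMem_degenerate, SSet.mem_degenerate_iff]
  constructor
  · rintro hx ⟨m, hm, σ, hσ, y, rfl⟩
    exact (hx m σ y (SimplexCategory.epi_iff_surjective.1 hσ) rfl).not_gt hm
  · intro hx m σ y hσ hxy
    by_contra! hm
    exact hx ⟨m, hm, σ, SimplexCategory.epi_iff_surjective.2 hσ, y, hxy.symm⟩

lemma exists_surjective_isNondeg (x : X _⦋n⦌) :
    ∃ (m : ℕ) (σ : ⦋n⦌ ⟶ ⦋m⦌) (z : X _⦋m⦌),
      Function.Surjective σ.toOrderHom ∧ IsNondeg z ∧ x = X.map σ.op z := by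
  obtain ⟨m, σ, hσ, ⟨z, hz⟩, rfl⟩ := X.exists_nonDegenerate x
  exact ⟨m, σ, z, SimplexCategory.epi_iff_surjective.1 hσ,
    (isNondeg_iff_mem_nonDegenerate z).2 hz, rfl⟩

lemma eq_of_map_eq_map_of_isNondeg {m m₂ : ℕ} {σ : ⦋n⦌ ⟶ ⦋m⦌} {σ₂ : ⦋n⦌ ⟶ ⦋m₂⦌}
    {z : X _⦋m⦌} {z₂ : X _⦋m₂⦌} (hσ : Function.Surjective σ.toOrderHom)
    (hσ₂ : Function.Surjective σ₂.toOrderHom) (hz : IsNondeg z) (hz₂ : IsNondeg z₂)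
    (h : X.map σ.op z = X.map σ₂.op z₂) : m₂ = m ∧ HEq σ₂ σ ∧ HEq z₂ z := by
  have := SimplexCategory.epi_iff_surjective.2 hσ
  have := SimplexCategory.epi_iff_surjective.2 hσ₂
  rw [isNondeg_iff_mem_nonDegenerate] at hz hz₂
  obtain rfl := X.unique_nonDegenerate_dim _ σ₂ ⟨z₂, hz₂⟩ rfl σ ⟨z, hz⟩ h.symm
  exact ⟨rfl, heq_of_eq (X.unique_nonDegenerate_map _ σ₂ ⟨z₂, hz₂⟩ rfl σ ⟨z, hz⟩ h.symm),
    heq_of_eq (congrArg Subtype.val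
      (X.unique_nonDegenerate_simplex _ σ₂ ⟨z₂, hz₂⟩ rfl σ ⟨z, hz⟩ h.symm))⟩

end EilenbergZilber

section EilenbergZilberData

variable {X : SSet} {n : ℕ} (x : X _⦋n⦌)

noncomputable def ezDim : ℕ := (exists_surjective_isNondeg x).choose

noncomputable def ezEpi : ⦋n⦌ ⟶ ⦋ezDim x⦌ := (exists_surjective_isNondeg x).choose_spec.choose

noncomputable def ezCore : X _⦋ezDim x⦌ :=
  (exists_surjective_isNondeg x).choose_spec.choose_spec.choose

lemma ezEpi_surjective : Function.Surjective (ezEpi x).toOrderHom :=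
  (exists_surjective_isNondeg x).choose_spec.choose_spec.choose_spec.1

lemma isNondeg_ezCore : IsNondeg (ezCore x) :=
  (exists_surjective_isNondeg x).choose_spec.choose_spec.choose_spec.2.1

lemma map_ezEpi_ezCore : X.map (ezEpi x).op (ezCore x) = x :=
  (exists_surjective_isNondeg x).choose_spec.choose_spec.choose_spec.2.2.symm

end EilenbergZilberData

lemma IsNondeg.map_of_val_eq {X : SSet} {k m : ℕ} {z : X _⦋m⦌} (hz : IsNondeg z)
    (w : ⦋k⦌ ⟶ ⦋m⦌) (hkm : k = m) (hw : ∀ i, (w.toOrderHom i).val = i.val) :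
    IsNondeg (X.map w.op z) := by
  subst hkm
  obtain rfl : w = 𝟙 _ :=
    SimplexCategory.Hom.ext _ _ (OrderHom.ext _ _ (funext fun i => Fin.ext (hw i)))
  simpa using hz

lemma val_apply_eq_of_heq {d m m' : ℕ} (hm : m = m') {φ : ⦋d⦌ ⟶ ⦋m⦌} {ψ : ⦋d⦌ ⟶ ⦋m'⦌}
    (h : HEq φ ψ) (r : Fin (d + 1)) : (φ.toOrderHom r).val = (ψ.toOrderHom r).val := by
  subst hm
  rw [eq_of_heq h]

section LevelSurj

variable {X Y Z : SSet} {p : X ⟶ Y}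

lemma LevelSurj.epi (hp : LevelSurj p) : Epi p :=
  have (m : SimplexCategoryᵒᵖ) : Epi (p.app m) := (epi_iff_surjective _).2 (hp m)
  NatTrans.epi_of_epi_app p

lemma LevelSurj.exists_comp_eq (hp : LevelSurj p) (f : X ⟶ Z)
    (hf : ∀ m (a b : X.obj m), p.app m a = p.app m b → f.app m a = f.app m b) :
    ∃ g : Y ⟶ Z, p ≫ g = f := by
  choose s hs using hp
  refine ⟨⟨fun m => TypeCat.ofHom fun y => f.app m (s m y), fun m m' φ => ?_⟩, ?_⟩
  · ext y
    change f.app m' (s m' (Y.map φ y)) = Z.map φ (f.app m (s m y))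
    rw [← NatTrans.naturality_apply]
    refine hf _ _ _ ?_
    rw [hs, NatTrans.naturality_apply, hs]
  · ext m x
    exact hf m _ _ (hs m _)

end LevelSurj

section NecklaceBasics

variable {N N' : ℕ} {J : Finset (Fin (N + 1))} {J' : Finset (Fin (N' + 1))}

lemma vtx_injective : Function.Injective (vtx J) :=
  fun _ _ h => congrArg (fun x => x.1 0) h

lemma Necklace.map_const_op {m : SimplexCategoryᵒᵖ} (x : (Necklace N J).obj m)
    (i : Fin (m.unop.len + 1)) :
    (Necklace N J).map (SimplexCategory.const ⦋0⦌ m.unop i).op x = vtx J (x.1 i) :=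
  eq_vtx _

lemma nvmap_apply (g : Necklace N J ⟶ Necklace N' J') {m : SimplexCategoryᵒᵖ}
    (x : (Necklace N J).obj m) (i : Fin (m.unop.len + 1)) :
    (g.app m x).1 i = nvmap g (x.1 i) := by
  have := NatTrans.naturality_apply g (SimplexCategory.const ⦋0⦌ m.unop i).op x
  rw [Necklace.map_const_op, app_vtx, Necklace.map_const_op] at this
  exact vtx_injective this.symm

lemma Necklace.hom_ext {g g' : Necklace N J ⟶ Necklace N' J'} (h : nvmap g = nvmap g') :
    g = g' := by
  ext m x
  refine Subtype.ext (OrderHom.ext _ _ (funext fun i => ?_))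
  exact (nvmap_apply g x i).trans ((congrFun h _).trans (nvmap_apply g' x i).symm)

def Necklace.mapOfMonotone (φ : Fin (N + 1) →o Fin (N' + 1))
    (hφ : ∀ v w, (∀ t ∈ J, ¬(v < t ∧ t < w)) → ∀ t' ∈ J', ¬(φ v < t' ∧ t' < φ w)) :
    Necklace N J ⟶ Necklace N' J' where
  app _ := TypeCat.ofHom fun x => ⟨φ.comp x.1, hφ _ _ x.2⟩
  naturality _ _ _ := rfl

end NecklaceBasics

section Beads

variable {N : ℕ} {J : Finset (Fin (N + 1))}

structure IsBead (J : Finset (Fin (N + 1))) (j j' : Fin (N + 1)) : Prop where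
  left_mem : j ∈ J
  right_mem : j' ∈ J
  le : j ≤ j'
  noJoint : ∀ t ∈ J, ¬(j < t ∧ t < j')

def prevJoint (h0 : (0 : Fin (N + 1)) ∈ J) (v : Fin (N + 1)) : Fin (N + 1) :=
  (J.filter (· ≤ v)).max' ⟨0, by simp [h0]⟩

def nextJoint (hN : Fin.last N ∈ J) (v : Fin (N + 1)) : Fin (N + 1) :=
  (J.filter (v ≤ ·)).min' ⟨Fin.last N, by simp [hN, Fin.le_last]⟩

section

variable (h0 : (0 : Fin (N + 1)) ∈ J) (hN : Fin.last N ∈ J)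

lemma prevJoint_mem_and_le (v : Fin (N + 1)) : prevJoint h0 v ∈ J ∧ prevJoint h0 v ≤ v :=
  Finset.mem_filter.1 (Finset.max'_mem _ _)

lemma le_prevJoint {v t : Fin (N + 1)} (ht : t ∈ J) (htv : t ≤ v) : t ≤ prevJoint h0 v :=
  Finset.le_max' _ _ (by simp [ht, htv])

lemma nextJoint_mem_and_le (v : Fin (N + 1)) : nextJoint hN v ∈ J ∧ v ≤ nextJoint hN v :=
  Finset.mem_filter.1 (Finset.min'_mem _ _)

lemma nextJoint_le {v t : Fin (N + 1)} (ht : t ∈ J) (hvt : v ≤ t) : nextJoint hN v ≤ t :=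
  Finset.min'_le _ _ (by simp [ht, hvt])

lemma isBead_prevJoint_nextJoint {v w : Fin (N + 1)} (hvw : v ≤ w)
    (hno : ∀ t ∈ J, ¬(v < t ∧ t < w)) : IsBead J (prevJoint h0 v) (nextJoint hN w) where
  left_mem := (prevJoint_mem_and_le h0 v).1
  right_mem := (nextJoint_mem_and_le hN w).1
  le := (prevJoint_mem_and_le h0 v).2.trans (hvw.trans (nextJoint_mem_and_le hN w).2)
  noJoint t ht := by
    rintro ⟨hl, hr⟩
    refine hno t ht ⟨lt_of_not_ge fun htv => ?_, lt_of_not_ge fun hwt => ?_⟩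
    · exact (le_prevJoint h0 ht htv).not_gt hl
    · exact (nextJoint_le hN ht hwt).not_gt hr

end

section

variable {j j' : Fin (N + 1)} (hle : j ≤ j') (hno : ∀ t ∈ J, ¬(j < t ∧ t < j'))

lemma bead_val (r : Fin (j'.val - j.val + 1)) : ((bead J j j' hle hno).1 r).val = j + r := rfl

lemma bead_zero : (bead J j j' hle hno).1 0 = j := Fin.ext (by simp [bead_val])

lemma bead_last : (bead J j j' hle hno).1 (Fin.last _) = j' :=
  Fin.ext (by simp [bead_val, Fin.le_def.1 hle])

end

def beadCoord {m : SimplexCategoryᵒᵖ} (a : (Necklace N J).obj m) (j : Fin (N + 1))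
    {j' : Fin (N + 1)} (hj' : a.1 (Fin.last _) ≤ j') : m.unop ⟶ ⦋j'.val - j.val⦌ :=
  SimplexCategory.Hom.mk ⟨fun i => ⟨(a.1 i).val - j.val, by
    have := Fin.le_def.1 (a.1.monotone (Fin.le_last i))
    change _ < j'.val - j.val + 1
    omega⟩, fun _ _ h => Nat.sub_le_sub_right (a.1.monotone h) _⟩

lemma app_eq_map_app_bead {S : SSet} (F : Necklace N J ⟶ S) {m : SimplexCategoryᵒᵖ}
    (a : (Necklace N J).obj m) {j j' : Fin (N + 1)} (hle : j ≤ j')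
    (hno : ∀ t ∈ J, ¬(j < t ∧ t < j')) (hj : j ≤ a.1 0) (hj' : a.1 (Fin.last _) ≤ j') :
    F.app m a = S.map (beadCoord a j hj').op (F.app _ (bead J j j' hle hno)) := by
  have ha : (Necklace N J).map (beadCoord a j hj').op (bead J j j' hle hno) = a := by
    refine Subtype.ext (OrderHom.ext _ _ (funext fun i => Fin.ext ?_))
    have := Fin.le_def.1 (hj.trans (a.1.monotone (Fin.zero_le i)))
    change j.val + ((a.1 i).val - j.val) = (a.1 i).val
    omega
  conv_lhs => rw [← ha]
  exact NatTrans.naturality_apply F _ _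

lemma prevJoint_eq_of_isBead (h0 : (0 : Fin (N + 1)) ∈ J) {j j' v : Fin (N + 1)}
    (hb : IsBead J j j') (hjv : j ≤ v) (hvj' : v < j') : prevJoint h0 v = j := by
  obtain ⟨hmem, hle⟩ := prevJoint_mem_and_le h0 v
  refine le_antisymm (not_lt.1 fun h => hb.noJoint _ hmem ⟨h, hle.trans_lt hvj'⟩) ?_
  exact le_prevJoint h0 hb.left_mem hjv

lemma nextJoint_eq_of_isBead (hN : Fin.last N ∈ J) {j j' v : Fin (N + 1)}
    (hb : IsBead J j j') (hjv : j < v) (hvj' : v ≤ j') : nextJoint hN v = j' := by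
  obtain ⟨hmem, hle⟩ := nextJoint_mem_and_le hN v
  refine le_antisymm (nextJoint_le hN hb.right_mem hvj') ?_
  exact not_lt.1 fun h => hb.noJoint _ hmem ⟨hjv.trans_le hle, h⟩

lemma noJoint_castSucc_succ (u : Fin N) : ∀ t ∈ J, ¬(u.castSucc < t ∧ t < u.succ) :=
  fun _ _ ht => ht.1.not_ge (Fin.le_castSucc_iff.2 ht.2)

end Beads

section VertexMap

variable {N N' : ℕ} {J : Finset (Fin (N + 1))} {J' : Finset (Fin (N' + 1))}
  (g : Necklace N J ⟶ Necklace N' J')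

lemma nvmap_le_and_noJoint {j j' : Fin (N + 1)} (hle : j ≤ j')
    (hno : ∀ t ∈ J, ¬(j < t ∧ t < j')) :
    nvmap g j ≤ nvmap g j' ∧ ∀ t' ∈ J', ¬(nvmap g j < t' ∧ t' < nvmap g j') := by
  have h := g.app _ (bead J j j' hle hno) |>.2
  have hmono := (g.app _ (bead J j j' hle hno)).1.monotone (Fin.zero_le (Fin.last _))
  rw [nvmap_apply, nvmap_apply, bead_zero, bead_last] at hmono
  unfold NeckCond at h
  rw [nvmap_apply, nvmap_apply, bead_zero, bead_last] at h
  exact ⟨hmono, h⟩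

lemma nvmap_monotone : Monotone (nvmap g) :=
  Fin.monotone_iff_le_succ.2 fun u =>
    (nvmap_le_and_noJoint g u.castSucc_le_succ (noJoint_castSucc_succ u)).1

variable {g} (hg : LevelSurj g)
include hg

lemma nvmap_surjective : Function.Surjective (nvmap g) := by
  intro v'
  obtain ⟨x, hx⟩ := hg _ (vtx J' v')
  refine ⟨x.1 0, ?_⟩
  rw [← nvmap_apply, hx]
  rfl

lemma nvmap_mem (h0' : (0 : Fin (N' + 1)) ∈ J') (hN' : Fin.last N' ∈ J') {t : Fin (N + 1)}
    (ht : t ∈ J) : nvmap g t ∈ J' := by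
  by_contra hnot
  have hb := isBead_prevJoint_nextJoint h0' hN' (le_refl (nvmap g t))
    fun _ _ h => (h.1.trans h.2).false
  have hc : prevJoint h0' (nvmap g t) < nvmap g t := lt_of_le_of_ne
    (prevJoint_mem_and_le h0' _).2 fun h => hnot (h ▸ hb.left_mem)
  have hc' : nvmap g t < nextJoint hN' (nvmap g t) := lt_of_le_of_ne
    (nextJoint_mem_and_le hN' _).2 fun h => hnot (h ▸ hb.right_mem)
  obtain ⟨x, hx⟩ := hg _ (bead J' _ _ hb.le hb.noJoint)
  have hx0 := nvmap_apply g x 0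
  have hxl := nvmap_apply g x (Fin.last _)
  rw [hx, bead_zero] at hx0
  rw [hx, bead_last] at hxl
  exact x.2 t ht ⟨(nvmap_monotone g).reflect_lt (hx0 ▸ hc),
    (nvmap_monotone g).reflect_lt (hxl ▸ hc')⟩

lemma exists_mem_nvmap_eq (h0 : (0 : Fin (N + 1)) ∈ J) (hN : Fin.last N ∈ J) {t' : Fin (N' + 1)}
    (ht' : t' ∈ J') : ∃ t ∈ J, nvmap g t = t' := by
  obtain ⟨v, rfl⟩ := nvmap_surjective hg t'
  have hb := isBead_prevJoint_nextJoint h0 hN (le_refl v) fun _ _ h => (h.1.trans h.2).false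
  have hno := (nvmap_le_and_noJoint g hb.le hb.noJoint).2 _ ht'
  rcases (nvmap_monotone g (prevJoint_mem_and_le h0 v).2).lt_or_eq with hlt | heq
  · refine ⟨_, hb.right_mem, le_antisymm ?_ (nvmap_monotone g (nextJoint_mem_and_le hN v).2)⟩
    exact not_lt.1 fun h => hno ⟨hlt, h⟩
  · exact ⟨_, hb.left_mem, heq⟩

lemma isBead_nvmap (h0' : (0 : Fin (N' + 1)) ∈ J') (hN' : Fin.last N' ∈ J') {j j' : Fin (N + 1)}
    (hb : IsBead J j j') : IsBead J' (nvmap g j) (nvmap g j') where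
  left_mem := nvmap_mem hg h0' hN' hb.left_mem
  right_mem := nvmap_mem hg h0' hN' hb.right_mem
  le := (nvmap_le_and_noJoint g hb.le hb.noJoint).1
  noJoint := (nvmap_le_and_noJoint g hb.le hb.noJoint).2

end VertexMap

lemma Necklace.levelSurj_mapOfMonotone {N N' : ℕ} {J : Finset (Fin (N + 1))}
    {J' : Finset (Fin (N' + 1))} (h0 : (0 : Fin (N + 1)) ∈ J) (hN : Fin.last N ∈ J)
    (φ : Fin (N + 1) →o Fin (N' + 1)) (hφ : Function.Surjective φ) (hJ : ∀ t ∈ J, φ t ∈ J')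
    (hφJ : ∀ v w, (∀ t ∈ J, ¬(v < t ∧ t < w)) → ∀ t' ∈ J', ¬(φ v < t' ∧ t' < φ w)) :
    LevelSurj (Necklace.mapOfMonotone φ hφJ) := by
  intro m y
  obtain ⟨s, hs⟩ := φ.exists_section_of_surjective hφ
  have hy i : y.1 0 ≤ y.1 i ∧ y.1 i ≤ y.1 (Fin.last _) :=
    ⟨y.1.monotone (Fin.zero_le i), y.1.monotone (Fin.le_last i)⟩
  -- `y` is lifted by a monotone section of `φ`, clamped to a bead `[j, j']` of `J` lying over `y`
  have hL : (J.filter (φ · ≤ y.1 0)).Nonempty :=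
    ⟨0, Finset.mem_filter.2 ⟨h0, φ.apply_zero_of_surjective hφ ▸ Fin.zero_le _⟩⟩
  set j := (J.filter (φ · ≤ y.1 0)).max' hL
  obtain ⟨-, hjy⟩ := Finset.mem_filter.1 (Finset.max'_mem _ hL)
  have hR : (J.filter fun t => j ≤ t ∧ y.1 (Fin.last _) ≤ φ t).Nonempty :=
    ⟨Fin.last N, Finset.mem_filter.2 ⟨hN, Fin.le_last _,
      φ.apply_last_of_surjective hφ ▸ Fin.le_last _⟩⟩
  set j' := (J.filter fun t => j ≤ t ∧ y.1 (Fin.last _) ≤ φ t).min' hR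
  obtain ⟨-, hjj', hyj'⟩ := Finset.mem_filter.1 (Finset.min'_mem _ hR)
  have hno : ∀ t ∈ J, ¬(j < t ∧ t < j') := by
    rintro t ht ⟨hjt, htj'⟩
    refine y.2 (φ t) (hJ t ht) ⟨lt_of_not_ge fun h => ?_, lt_of_not_ge fun h => ?_⟩
    · exact hjt.not_ge (Finset.le_max' _ _ (Finset.mem_filter.2 ⟨ht, h⟩))
    · exact htj'.not_ge (Finset.min'_le _ _ (Finset.mem_filter.2 ⟨ht, hjt.le, h⟩))
  have hlift i : φ (max j (min j' (s (y.1 i)))) = y.1 i :=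
    φ.monotone.apply_max_min_eq hjj' (hs _) (hjy.trans (hy i).1) ((hy i).2.trans hyj')
  refine ⟨⟨⟨fun i => max j (min j' (s (y.1 i))), fun i i' h => ?_⟩, ?_⟩, ?_⟩
  · exact max_le_max le_rfl (min_le_min le_rfl (s.monotone (y.1.monotone h)))
  · rintro t ht ⟨h1, h2⟩
    exact hno t ht ⟨(le_max_left _ _).trans_lt h1, h2.trans_le (max_le hjj' (min_le_left _ _))⟩
  · exact Subtype.ext (OrderHom.ext _ _ (funext hlift))

section Collapse

variable {S : SSet} {N : ℕ} {J : Finset (Fin (N + 1))} (f : Necklace N J ⟶ S)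

open Classical in
-- Only evaluated on beads; the `else` branch merely makes the definition total.
noncomputable def beadImage (j j' : Fin (N + 1)) : S _⦋j'.val - j.val⦌ :=
  if h : IsBead J j j' then f.app _ (bead J j j' h.le h.noJoint)
  else S.map (SimplexCategory.const _ ⦋0⦌ 0).op (f.app _ (vtx J 0))

/-- Extended to all of `ℕ` by clamping the argument, so that it can be telescoped. -/
noncomputable def beadEpi (j j' : Fin (N + 1)) (r : ℕ) : ℕ :=
  ((ezEpi (beadImage f j j')).toOrderHom
    ⟨min r (j'.val - j.val), Nat.lt_succ_of_le (min_le_right _ _)⟩).val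

section

variable (j j' : Fin (N + 1))

lemma beadEpi_monotone : Monotone (beadEpi f j j') :=
  fun _ _ h => (ezEpi (beadImage f j j')).toOrderHom.monotone
    (Fin.mk_le_mk.2 (min_le_min_right _ h))

lemma beadEpi_of_le {r : ℕ} (hr : r ≤ j'.val - j.val) :
    beadEpi f j j' r =
      ((ezEpi (beadImage f j j')).toOrderHom ⟨r, Nat.lt_succ_of_le hr⟩).val := by
  simp only [beadEpi, min_eq_left hr]

lemma beadEpi_zero : beadEpi f j j' 0 = 0 := by
  rw [beadEpi_of_le f j j' (Nat.zero_le _)]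
  exact congrArg Fin.val ((ezEpi _).toOrderHom.apply_zero_of_surjective (ezEpi_surjective _))

lemma beadEpi_length : beadEpi f j j' (j'.val - j.val) = ezDim (beadImage f j j') := by
  rw [beadEpi_of_le f j j' le_rfl]
  exact congrArg Fin.val ((ezEpi _).toOrderHom.apply_last_of_surjective (ezEpi_surjective _))

lemma beadEpi_succ_le (r : ℕ) : beadEpi f j j' (r + 1) ≤ beadEpi f j j' r + 1 := by
  rcases lt_or_ge r (j'.val - j.val) with hr | hr
  · rw [beadEpi_of_le f j j' hr, beadEpi_of_le f j j' hr.le]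
    exact (ezEpi _).toOrderHom.val_apply_succ_le_of_surjective (ezEpi_surjective _) ⟨r, hr⟩
  · simp only [beadEpi, min_eq_right hr, min_eq_right (hr.trans r.le_succ)]
    omega

end

variable (h0 : (0 : Fin (N + 1)) ∈ J) (hN : Fin.last N ∈ J)

/-- `0` or `1`, according to whether the Eilenberg–Zilber epimorphism of the bead containing the
edge `u → u + 1` identifies its endpoints. -/
noncomputable def edgeStep (u : ℕ) : ℕ :=
  if hu : u < N then
    let j := prevJoint h0 (Fin.castSucc ⟨u, hu⟩)
    let j' := nextJoint hN (Fin.succ ⟨u, hu⟩)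
    beadEpi f j j' (u - j + 1) - beadEpi f j j' (u - j)
  else 0

/-- The vertex of the collapsed necklace to which the vertex `v` is sent. -/
noncomputable def collapse (v : ℕ) : ℕ := ∑ u ∈ Finset.range v, edgeStep f h0 hN u

lemma edgeStep_le_one (u : ℕ) : edgeStep f h0 hN u ≤ 1 := by
  unfold edgeStep
  split_ifs
  · exact tsub_le_iff_left.2 (beadEpi_succ_le f _ _ _)
  · exact zero_le_one

lemma edgeStep_of_isBead {j j' : Fin (N + 1)} (hb : IsBead J j j') {k : ℕ}
    (hk : j.val + k < j'.val) :
    edgeStep f h0 hN (j + k) = beadEpi f j j' (k + 1) - beadEpi f j j' k := by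
  have hu : j.val + k < N := hk.trans_le (Nat.lt_succ_iff.1 j'.isLt)
  have hprev : prevJoint h0 (Fin.castSucc ⟨j + k, hu⟩) = j :=
    prevJoint_eq_of_isBead h0 hb (Fin.le_def.2 (by simp)) (Fin.lt_def.2 (by simpa using hk))
  have hnext : nextJoint hN (Fin.succ ⟨j + k, hu⟩) = j' :=
    nextJoint_eq_of_isBead hN hb (Fin.lt_def.2 (by simp)) (Fin.le_def.2 (by simpa using hk))
  simp only [edgeStep, hu, dif_pos, hprev, hnext, Nat.add_sub_cancel_left]

lemma collapse_monotone : Monotone (collapse f h0 hN) :=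
  fun _ _ h => Finset.sum_le_sum_of_subset (Finset.range_subset_range.2 h)

lemma collapse_of_isBead {j j' : Fin (N + 1)} (hb : IsBead J j j') {v : ℕ} (hjv : j.val ≤ v)
    (hvj' : v ≤ j'.val) : collapse f h0 hN v = collapse f h0 hN j + beadEpi f j j' (v - j) := by
  obtain ⟨k, rfl⟩ := Nat.exists_eq_add_of_le hjv
  rw [collapse, Finset.sum_range_add, Nat.add_sub_cancel_left]
  congr 1
  rw [Finset.sum_congr rfl fun i hi => edgeStep_of_isBead f h0 hN hb (k := i)
    (by have := Finset.mem_range.1 hi; omega), Finset.sum_range_tsub (beadEpi_monotone f j j'),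
    beadEpi_zero, Nat.sub_zero]

lemma exists_collapse_eq {v c : ℕ} (hc : c ≤ collapse f h0 hN v) :
    ∃ w ≤ v, collapse f h0 hN w = c := by
  induction v with
  | zero => exact ⟨0, le_rfl, (Nat.le_zero.1 hc).symm⟩
  | succ v ih =>
    rcases le_or_gt c (collapse f h0 hN v) with h | h
    · obtain ⟨w, hw, hwc⟩ := ih h
      exact ⟨w, hw.trans v.le_succ, hwc⟩
    · refine ⟨v + 1, le_rfl, le_antisymm ?_ hc⟩
      have := edgeStep_le_one f h0 hN v
      rw [collapse, Finset.sum_range_succ]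
      exact (Nat.add_le_add_left this _).trans h

end Collapse

section Descent

variable {S : SSet} {N : ℕ} {J : Finset (Fin (N + 1))} (f : Necklace N J ⟶ S)
  (h0 : (0 : Fin (N + 1)) ∈ J) (hN : Fin.last N ∈ J)

lemma app_eq_map_ezCore {m : SimplexCategoryᵒᵖ} (a : (Necklace N J).obj m) {j j' : Fin (N + 1)}
    (hbead : IsBead J j j') (hj : j ≤ a.1 0) (hj' : a.1 (Fin.last _) ≤ j') :
    f.app m a = S.map (beadCoord a j hj' ≫ ezEpi (beadImage f j j')).op
      (ezCore (beadImage f j j')) := by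
  rw [op_comp, S.map_comp, types_comp_apply, map_ezEpi_ezCore, beadImage, dif_pos hbead]
  exact app_eq_map_app_bead f a hbead.le hbead.noJoint hj hj'

lemma val_beadCoord_comp_ezEpi {m : SimplexCategoryᵒᵖ} (a : (Necklace N J).obj m)
    {j j' : Fin (N + 1)} (hbead : IsBead J j j') (hj : j ≤ a.1 0) (hj' : a.1 (Fin.last _) ≤ j')
    (i : Fin (m.unop.len + 1)) :
    ((beadCoord a j hj' ≫ ezEpi (beadImage f j j')).toOrderHom i).val =
      collapse f h0 hN (a.1 i) - collapse f h0 hN j := by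
  have hji := Fin.le_def.1 (hj.trans (a.1.monotone (Fin.zero_le i)))
  have hij' := Fin.le_def.1 ((a.1.monotone (Fin.le_last i)).trans hj')
  rw [collapse_of_isBead f h0 hN hbead hji hij', Nat.add_sub_cancel_left,
    beadEpi_of_le f j j' (by omega)]
  rfl

lemma app_eq_app_of_isBead {m : SimplexCategoryᵒᵖ} {a b : (Necklace N J).obj m}
    {j j' : Fin (N + 1)} (hbead : IsBead J j j') (ha : j ≤ a.1 0) (ha' : a.1 (Fin.last _) ≤ j')
    (hb : j ≤ b.1 0) (hb' : b.1 (Fin.last _) ≤ j')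
    (hab : ∀ i, collapse f h0 hN (a.1 i) = collapse f h0 hN (b.1 i)) :
    f.app m a = f.app m b := by
  have : beadCoord a j ha' ≫ ezEpi (beadImage f j j') = beadCoord b j hb' ≫ ezEpi _ := by
    refine SimplexCategory.Hom.ext _ _ (OrderHom.ext _ _ (funext fun i => Fin.ext ?_))
    rw [val_beadCoord_comp_ezEpi f h0 hN a hbead ha ha',
      val_beadCoord_comp_ezEpi f h0 hN b hbead hb hb', hab]
  rw [app_eq_map_ezCore f a hbead ha ha', app_eq_map_ezCore f b hbead hb hb', this]

lemma app_vtx_eq_of_collapse_eq {v w : Fin (N + 1)} (hvw : v ≤ w)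
    (h : collapse f h0 hN v = collapse f h0 hN w) : f.app _ (vtx J v) = f.app _ (vtx J w) := by
  induction w using Fin.induction generalizing v with
  | zero => rw [Fin.le_zero_iff.1 hvw]
  | succ u ih =>
    rcases hvw.lt_or_eq with hlt | rfl
    · have hvu : v ≤ u.castSucc := Fin.le_castSucc_iff.2 hlt
      have h1 := collapse_monotone f h0 hN (Fin.le_def.1 hvu)
      have h2 := collapse_monotone f h0 hN (Fin.le_def.1 u.castSucc_le_succ)
      have hbead := isBead_prevJoint_nextJoint h0 hN u.castSucc_le_succ (noJoint_castSucc_succ u)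
      have hu : collapse f h0 hN u.castSucc = collapse f h0 hN u.succ := by omega
      rw [ih hvu (by omega)]
      exact app_eq_app_of_isBead f h0 hN hbead (prevJoint_mem_and_le h0 _).2
        (u.castSucc_le_succ.trans (nextJoint_mem_and_le hN _).2)
        ((prevJoint_mem_and_le h0 _).2.trans u.castSucc_le_succ) (nextJoint_mem_and_le hN _).2
        fun _ => hu
    · rfl

lemma app_eq_map_app_vtx_of_collapse_eq {m : SimplexCategoryᵒᵖ} (a : (Necklace N J).obj m)
    (h : collapse f h0 hN (a.1 0) = collapse f h0 hN (a.1 (Fin.last _))) :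
    f.app m a = S.map (SimplexCategory.const m.unop ⦋0⦌ 0).op (f.app _ (vtx J (a.1 0))) := by
  have ha := a.1.monotone (Fin.zero_le (Fin.last _))
  have hbead := isBead_prevJoint_nextJoint h0 hN ha a.2
  rw [← NatTrans.naturality_apply]
  refine app_eq_app_of_isBead f h0 hN hbead (prevJoint_mem_and_le h0 _).2
    (nextJoint_mem_and_le hN _).2 (prevJoint_mem_and_le h0 _).2
    (ha.trans (nextJoint_mem_and_le hN _).2) fun i => le_antisymm ?_ ?_
  · exact h ▸ collapse_monotone f h0 hN (Fin.le_def.1 (a.1.monotone (Fin.le_last i)))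
  · exact collapse_monotone f h0 hN (Fin.le_def.1 (a.1.monotone (Fin.zero_le i)))

lemma le_and_le_nextJoint_of_collapse_lt {m : SimplexCategoryᵒᵖ} {a b : (Necklace N J).obj m}
    (hab : ∀ i, collapse f h0 hN (a.1 i) = collapse f h0 hN (b.1 i))
    (hlt : collapse f h0 hN (a.1 0) < collapse f h0 hN (a.1 (Fin.last _))) :
    prevJoint h0 (a.1 0) ≤ b.1 0 ∧ b.1 (Fin.last _) ≤ nextJoint hN (a.1 (Fin.last _)) := by
  obtain ⟨hj, hja⟩ := prevJoint_mem_and_le h0 (a.1 0)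
  obtain ⟨hj', hja'⟩ := nextJoint_mem_and_le hN (a.1 (Fin.last _))
  have hmono := collapse_monotone f h0 hN
  constructor
  · by_contra! h
    have hb : b.1 (Fin.last _) ≤ prevJoint h0 (a.1 0) := not_lt.1 fun h' => b.2 _ hj ⟨h, h'⟩
    have := hmono (Fin.le_def.1 (hb.trans hja))
    rw [← hab] at this
    exact (hlt.trans_le this).false
  · by_contra! h
    have hb : nextJoint hN (a.1 (Fin.last _)) ≤ b.1 0 := not_lt.1 fun h' => b.2 _ hj' ⟨h', h⟩
    have := hmono (Fin.le_def.1 (hja'.trans hb))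
    rw [← hab 0] at this
    exact (hlt.trans_le this).false

lemma app_eq_app_of_collapse_eq {m : SimplexCategoryᵒᵖ} {a b : (Necklace N J).obj m}
    (hab : ∀ i, collapse f h0 hN (a.1 i) = collapse f h0 hN (b.1 i)) : f.app m a = f.app m b := by
  rcases (collapse_monotone f h0 hN
    (Fin.le_def.1 (a.1.monotone (Fin.zero_le (Fin.last _))))).lt_or_eq with hlt | hc
  · obtain ⟨hb, hb'⟩ := le_and_le_nextJoint_of_collapse_lt f h0 hN hab hlt
    exact app_eq_app_of_isBead f h0 hN
      (isBead_prevJoint_nextJoint h0 hN (a.1.monotone (Fin.zero_le _)) a.2)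
      (prevJoint_mem_and_le h0 _).2 (nextJoint_mem_and_le hN _).2 hb hb' hab
  · rw [app_eq_map_app_vtx_of_collapse_eq f h0 hN a hc,
      app_eq_map_app_vtx_of_collapse_eq f h0 hN b (by rw [← hab, ← hab]; exact hc)]
    rcases le_total (a.1 0) (b.1 0) with h | h
    · rw [app_vtx_eq_of_collapse_eq f h0 hN h (hab 0)]
    · rw [app_vtx_eq_of_collapse_eq f h0 hN h (hab 0).symm]

end Descent

section Construction

variable {S : SSet} {N : ℕ} {J : Finset (Fin (N + 1))} (f : Necklace N J ⟶ S)
  (h0 : (0 : Fin (N + 1)) ∈ J) (hN : Fin.last N ∈ J)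

noncomputable def collapseHom : Fin (N + 1) →o Fin (collapse f h0 hN N + 1) where
  toFun v := ⟨collapse f h0 hN v, Nat.lt_succ_of_le (collapse_monotone f h0 hN v.is_le)⟩
  monotone' _ _ h := Fin.le_def.2 (collapse_monotone f h0 hN (Fin.le_def.1 h))

lemma collapseHom_surjective : Function.Surjective (collapseHom f h0 hN) := by
  intro c
  obtain ⟨w, hw, hwc⟩ := exists_collapse_eq f h0 hN (Nat.lt_succ_iff.1 c.isLt)
  exact ⟨⟨w, Nat.lt_succ_of_le hw⟩, Fin.ext hwc⟩

noncomputable def collapsedJoints : Finset (Fin (collapse f h0 hN N + 1)) :=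
  J.image (collapseHom f h0 hN)

lemma collapseHom_zero : collapseHom f h0 hN 0 = 0 :=
  Fin.ext (Finset.sum_range_zero (edgeStep f h0 hN))

lemma zero_mem_collapsedJoints : 0 ∈ collapsedJoints f h0 hN :=
  Finset.mem_image.2 ⟨0, h0, collapseHom_zero f h0 hN⟩

lemma last_mem_collapsedJoints : Fin.last _ ∈ collapsedJoints f h0 hN :=
  Finset.mem_image.2 ⟨Fin.last N, hN, rfl⟩

noncomputable def collapseMap : Necklace N J ⟶ Necklace _ (collapsedJoints f h0 hN) :=
  Necklace.mapOfMonotone (collapseHom f h0 hN) fun _ _ hno t' ht' ⟨h1, h2⟩ => by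
    obtain ⟨t, ht, rfl⟩ := Finset.mem_image.1 ht'
    exact hno t ht ⟨(collapseHom f h0 hN).monotone.reflect_lt h1,
      (collapseHom f h0 hN).monotone.reflect_lt h2⟩

lemma nvmap_collapseMap : nvmap (collapseMap f h0 hN) = collapseHom f h0 hN := rfl

lemma collapseMap_app_vtx (v : Fin (N + 1)) :
    (collapseMap f h0 hN).app _ (vtx J v) = vtx _ (collapseHom f h0 hN v) := rfl

lemma levelSurj_collapseMap : LevelSurj (collapseMap f h0 hN) :=
  Necklace.levelSurj_mapOfMonotone h0 hN _ (collapseHom_surjective f h0 hN)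
    (fun _ ht => Finset.mem_image_of_mem _ ht) _

lemma exists_comp_collapseMap_eq : ∃ g, collapseMap f h0 hN ≫ g = f :=
  (levelSurj_collapseMap f h0 hN).exists_comp_eq f fun _ _ _ hab =>
    app_eq_app_of_collapse_eq f h0 hN fun i => congrArg (fun x => (x.1 i).val) hab

lemma collapse_prevJoint_nextJoint_of_app_eq_bead {c c' : Fin (collapse f h0 hN N + 1)}
    (hc : c ∈ collapsedJoints f h0 hN) (hc' : c' ∈ collapsedJoints f h0 hN) (hlt : c < c')
    (hno : ∀ t ∈ collapsedJoints f h0 hN, ¬(c < t ∧ t < c')) {x : (Necklace N J) _⦋c' - c⦌}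
    (hx : (collapseMap f h0 hN).app _ x = bead _ c c' hlt.le hno) :
    collapse f h0 hN (prevJoint h0 (x.1 0)) = c ∧
      collapse f h0 hN (nextJoint hN (x.1 (Fin.last _))) = c' := by
  have hxv i : collapse f h0 hN (x.1 i) = c + i := congrArg (fun y => (y.1 i).val) hx
  have hxl : collapse f h0 hN (x.1 (Fin.last _)) = c' := by
    rw [hxv]
    change c.val + (c'.val - c.val) = c'.val
    omega
  have hbead := isBead_prevJoint_nextJoint h0 hN (x.1.monotone (Fin.zero_le _)) x.2
  obtain ⟨-, -, -, hno'⟩ :=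
    isBead_nvmap (levelSurj_collapseMap f h0 hN) (zero_mem_collapsedJoints f h0 hN)
      (last_mem_collapsedJoints f h0 hN) hbead
  rw [nvmap_collapseMap] at hno'
  have hcc' := Fin.lt_def.1 hlt
  have h1 : collapse f h0 hN (prevJoint h0 (x.1 0)) ≤ c := by
    simpa [hxv] using collapse_monotone f h0 hN (Fin.le_def.1 (prevJoint_mem_and_le h0 (x.1 0)).2)
  have h2 : c'.val ≤ collapse f h0 hN (nextJoint hN (x.1 (Fin.last _))) := by
    have := collapse_monotone f h0 hN (Fin.le_def.1 (nextJoint_mem_and_le hN (x.1 (Fin.last _))).2)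
    rwa [hxl] at this
  refine ⟨le_antisymm h1 (not_lt.1 fun h => hno' c hc ⟨Fin.lt_def.2 h, ?_⟩),
    le_antisymm (not_lt.1 fun h => hno' c' hc' ⟨?_, Fin.lt_def.2 h⟩) h2⟩
  · exact Fin.lt_def.2 (hcc'.trans_le h2)
  · exact Fin.lt_def.2 (h1.trans_lt hcc')

lemma totallyNondeg_of_comp_collapseMap_eq {g : Necklace _ (collapsedJoints f h0 hN) ⟶ S}
    (hg : collapseMap f h0 hN ≫ g = f) : TotallyNondeg g := by
  intro c c' hc hc' hlt hno
  obtain ⟨x, hx⟩ := levelSurj_collapseMap f h0 hN _ (bead _ c c' hlt.le hno)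
  obtain ⟨hjc, hjc'⟩ := collapse_prevJoint_nextJoint_of_app_eq_bead f h0 hN hc hc' hlt hno hx
  have hxv i : collapse f h0 hN (x.1 i) = c + i := congrArg (fun y => (y.1 i).val) hx
  have hj := (prevJoint_mem_and_le h0 (x.1 0)).2
  have hj' := (nextJoint_mem_and_le hN (x.1 (Fin.last _))).2
  have hbead := isBead_prevJoint_nextJoint h0 hN (x.1.monotone (Fin.zero_le _)) x.2
  have hlen := collapse_of_isBead f h0 hN hbead (Fin.le_def.1 hbead.le) le_rfl
  rw [beadEpi_length] at hlen
  have hgx : g.app _ ((collapseMap f h0 hN).app _ x) = f.app _ x :=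
    congrArg (fun φ : Necklace N J ⟶ S => φ.app _ x) hg
  rw [← hx, hgx, app_eq_map_ezCore f x hbead hj hj']
  refine (isNondeg_ezCore _).map_of_val_eq _ (by omega) fun i => ?_
  rw [val_beadCoord_comp_ezEpi f h0 hN x hbead hj hj', hxv, hjc, Nat.add_sub_cancel_left]

end Construction

section Uniqueness

variable {S : SSet} {N : ℕ} {J : Finset (Fin (N + 1))} (f : Necklace N J ⟶ S)
  (h0 : (0 : Fin (N + 1)) ∈ J) (hN : Fin.last N ∈ J)
  {N₂ : ℕ} {J₂ : Finset (Fin (N₂ + 1))} {p : Necklace N J ⟶ Necklace N₂ J₂}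
  {g : Necklace N₂ J₂ ⟶ S}

lemma surjective_beadCoord_app_bead (hp : LevelSurj p) {j j' : Fin (N + 1)} (hb : IsBead J j j')
    (h : (p.app _ (bead J j j' hb.le hb.noJoint)).1 (Fin.last _) ≤ nvmap p j') :
    Function.Surjective
      (beadCoord (p.app _ (bead J j j' hb.le hb.noJoint)) (nvmap p j) h).toOrderHom := by
  intro t
  have hle := Fin.le_def.1 (nvmap_monotone p hb.le)
  have ht : (nvmap p j).val + t.val ≤ (nvmap p j').val := by
    have := t.isLt
    change _ < (nvmap p j').val - (nvmap p j).val + 1 at this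
    omega
  obtain ⟨v, hv⟩ := nvmap_surjective hp ⟨(nvmap p j).val + t.val, by omega⟩
  obtain ⟨w, hjw, hwj', hw⟩ : ∃ w, j ≤ w ∧ w ≤ j' ∧ nvmap p w = _ :=
    ⟨_, le_max_left _ _, max_le hb.le (min_le_left _ _), (nvmap_monotone p).apply_max_min_eq
      hb.le hv (Fin.le_def.2 (Nat.le_add_right _ _)) (Fin.le_def.2 ht)⟩
  have hjw' := Fin.le_def.1 hjw
  have hwj'' := Fin.le_def.1 hwj'
  refine ⟨⟨w.val - j.val, Nat.lt_succ_of_le (Nat.sub_le_sub_right hwj'' _)⟩, Fin.ext ?_⟩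
  change ((p.app _ (bead J j j' hb.le hb.noJoint)).1 _).val - (nvmap p j).val = t.val
  rw [nvmap_apply, show (bead J j j' hb.le hb.noJoint).1 ⟨w.val - j.val, _⟩ = w from
    Fin.ext (by rw [bead_val]; change j.val + (w.val - j.val) = w.val; omega), hw,
    Nat.add_sub_cancel_left]

variable (hp : LevelSurj p) (hg : TotallyNondeg g) (hpg : p ≫ g = f)
  (h0₂ : (0 : Fin (N₂ + 1)) ∈ J₂) (hN₂ : Fin.last N₂ ∈ J₂)
include hp hg hpg h0₂ hN₂

lemma nvmap_of_isBead {j j' : Fin (N + 1)} (hb : IsBead J j j') {v : Fin (N + 1)} (hjv : j ≤ v)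
    (hvj' : v ≤ j') : (nvmap p v).val = (nvmap p j).val + beadEpi f j j' (v - j) := by
  have hb₂ := isBead_nvmap hp h0₂ hN₂ hb
  set B := bead J j j' hb.le hb.noJoint
  have hB0 : (p.app _ B).1 0 = nvmap p j := by rw [nvmap_apply, bead_zero]
  have hBl : (p.app _ B).1 (Fin.last _) = nvmap p j' := by rw [nvmap_apply, bead_last]
  have key : S.map (ezEpi (beadImage f j j')).op (ezCore (beadImage f j j')) =
      S.map (beadCoord (p.app _ B) (nvmap p j) hBl.le).op
        (g.app _ (bead J₂ _ _ hb₂.le hb₂.noJoint)) := by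
    rw [map_ezEpi_ezCore, beadImage, dif_pos hb, ← app_eq_map_app_bead g _ _ _ hB0.ge]
    exact (congrArg (fun φ : Necklace N J ⟶ S => φ.app _ B) hpg).symm
  have hnd : IsNondeg (g.app _ (bead J₂ _ _ hb₂.le hb₂.noJoint)) := by
    rcases hb₂.le.lt_or_eq with hlt | heq
    · exact hg _ _ hb₂.left_mem hb₂.right_mem hlt hb₂.noJoint
    · intro _ _ _ _ _
      simp [heq]
  obtain ⟨hm, hσ, -⟩ := eq_of_map_eq_map_of_isNondeg (ezEpi_surjective _)
    (surjective_beadCoord_app_bead hp hb hBl.le) (isNondeg_ezCore _) hnd key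
  have hjv' := Fin.le_def.1 hjv
  have hvj'' := Fin.le_def.1 hvj'
  have hval := val_apply_eq_of_heq hm hσ
    ⟨v.val - j.val, Nat.lt_succ_of_le (Nat.sub_le_sub_right hvj'' _)⟩
  change ((p.app _ B).1 _).val - (nvmap p j).val = _ at hval
  rw [nvmap_apply, show B.1 ⟨v.val - j.val, _⟩ = v from
      Fin.ext (by rw [bead_val]; change j.val + (v.val - j.val) = v.val; omega),
    ← beadEpi_of_le f j j' (by omega)] at hval
  have := Fin.le_def.1 (nvmap_monotone p hjv)
  omega

lemma nvmap_val_eq_collapse (hv0 : p.app _ (vtx J 0) = vtx J₂ 0) (v : Fin (N + 1)) :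
    (nvmap p v).val = collapse f h0 hN v := by
  induction v using Fin.induction with
  | zero =>
    rw [vtx_injective ((app_vtx p 0).symm.trans hv0)]
    exact (Finset.sum_range_zero _).symm
  | succ u ih =>
    have hb := isBead_prevJoint_nextJoint h0 hN u.castSucc_le_succ (noJoint_castSucc_succ u)
    have hj := (prevJoint_mem_and_le h0 u.castSucc).2
    have hj' := (nextJoint_mem_and_le hN u.succ).2
    have e1 := nvmap_of_isBead f hp hg hpg h0₂ hN₂ hb (hj.trans u.castSucc_le_succ) hj'
    have e2 := nvmap_of_isBead f hp hg hpg h0₂ hN₂ hb hj (u.castSucc_le_succ.trans hj')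
    have c1 := collapse_of_isBead f h0 hN hb (Fin.le_def.1 (hj.trans u.castSucc_le_succ))
      (Fin.le_def.1 hj')
    have c2 := collapse_of_isBead f h0 hN hb (Fin.le_def.1 hj)
      (Fin.le_def.1 (u.castSucc_le_succ.trans hj'))
    omega

lemma exists_iso_collapseMap_comp_eq (hv0 : p.app _ (vtx J 0) = vtx J₂ 0)
    (hvl : p.app _ (vtx J (Fin.last N)) = vtx J₂ (Fin.last N₂)) :
    ∃ e : Necklace _ (collapsedJoints f h0 hN) ≅ Necklace N₂ J₂,
      collapseMap f h0 hN ≫ e.hom = p := by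
  have hval := nvmap_val_eq_collapse f h0 hN hp hg hpg h0₂ hN₂ hv0
  obtain rfl : N₂ = collapse f h0 hN N := by
    simpa [vtx_injective ((app_vtx p _).symm.trans hvl)] using hval (Fin.last N)
  have hφ v : nvmap p v = collapseHom f h0 hN v := Fin.ext (hval v)
  obtain rfl : J₂ = collapsedJoints f h0 hN := by
    ext t
    constructor
    · intro ht
      obtain ⟨s, hs, rfl⟩ := exists_mem_nvmap_eq hp h0 hN ht
      exact Finset.mem_image.2 ⟨s, hs, (hφ s).symm⟩
    · intro ht
      obtain ⟨s, hs, rfl⟩ := Finset.mem_image.1 ht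
      exact hφ s ▸ nvmap_mem hp h0₂ hN₂ hs
  exact ⟨Iso.refl _, (Category.comp_id _).trans (Necklace.hom_ext (funext hφ)).symm⟩

end Uniqueness
theorem stmt14 :
    (∀ (X : SSet) (n : ℕ) (z : X _⦋n⦌), IsDegenerate z →
      ∃ (m : ℕ) (σ : (⦋n⦌ : SimplexCategory) ⟶ ⦋m⦌) (z' : X _⦋m⦌),
        Function.Surjective σ.toOrderHom ∧ IsNondeg z' ∧ z = X.map σ.op z' ∧
        ∀ (m₂ : ℕ) (σ₂ : (⦋n⦌ : SimplexCategory) ⟶ ⦋m₂⦌) (z₂ : X _⦋m₂⦌),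
          Function.Surjective σ₂.toOrderHom → IsNondeg z₂ → z = X.map σ₂.op z₂ →
          m₂ = m ∧ HEq σ₂ σ ∧ HEq z₂ z') ∧
    (∀ (S : SSet) (N : ℕ) (J : Finset (Fin (N + 1)))
      (_ : (0 : Fin (N + 1)) ∈ J) (_ : Fin.last N ∈ J) (f : Necklace N J ⟶ S),
      ∃ (N' : ℕ) (J' : Finset (Fin (N' + 1)))
        (_ : (0 : Fin (N' + 1)) ∈ J') (_ : Fin.last N' ∈ J')
        (g : Necklace N' J' ⟶ S) (p : Necklace N J ⟶ Necklace N' J'),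
        TotallyNondeg g ∧ LevelSurj p ∧
        p.app _ (vtx J 0) = vtx J' 0 ∧
        p.app _ (vtx J (Fin.last N)) = vtx J' (Fin.last N') ∧
        p ≫ g = f ∧
        ∀ (N₂ : ℕ) (J₂ : Finset (Fin (N₂ + 1)))
          (_ : (0 : Fin (N₂ + 1)) ∈ J₂) (_ : Fin.last N₂ ∈ J₂)
          (g₂ : Necklace N₂ J₂ ⟶ S) (p₂ : Necklace N J ⟶ Necklace N₂ J₂),
          TotallyNondeg g₂ → LevelSurj p₂ →
          p₂.app _ (vtx J 0) = vtx J₂ 0 →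
          p₂.app _ (vtx J (Fin.last N)) = vtx J₂ (Fin.last N₂) →
          p₂ ≫ g₂ = f →
          ∃ e : Necklace N' J' ≅ Necklace N₂ J₂,
            e.hom ≫ g₂ = g ∧ p ≫ e.hom = p₂) := by
  refine ⟨fun X n z _ => ?_, fun S N J h0 hN f => ?_⟩
  · obtain ⟨m, σ, z', hσ, hz', rfl⟩ := exists_surjective_isNondeg z
    exact ⟨m, σ, z', hσ, hz', rfl, fun _ _ _ hσ₂ hz₂ h =>
      eq_of_map_eq_map_of_isNondeg hσ hσ₂ hz' hz₂ h⟩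
  · obtain ⟨g, hg⟩ := exists_comp_collapseMap_eq f h0 hN
    have hp := levelSurj_collapseMap f h0 hN
    refine ⟨_, _, zero_mem_collapsedJoints f h0 hN, last_mem_collapsedJoints f h0 hN, g,
      collapseMap f h0 hN, totallyNondeg_of_comp_collapseMap_eq f h0 hN hg, hp,
      by rw [collapseMap_app_vtx, collapseHom_zero], collapseMap_app_vtx f h0 hN _, hg, ?_⟩
    intro N₂ J₂ h0₂ hN₂ g₂ p₂ hg₂ hp₂ hv0 hvl hpg₂
    obtain ⟨e, he⟩ := exists_iso_collapseMap_comp_eq f h0 hN hp₂ hg₂ hpg₂ h0₂ hN₂ hv0 hvl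
    refine ⟨e, ?_, he⟩
    have := hp.epi
    exact cancel_epi (collapseMap f h0 hN) |>.1 (by rw [← Category.assoc, he, hpg₂, hg])

end Paper
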